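/- arXiv:2309.09835 — 2 statements merged into one kernel-verified Lean document; each statement's English description precedes it below -/
import Mathlib

section
/- Let $p>1$, $s\ge 0$, $a\ge 0$, and define $\varphi_a(t):=(a+s+t)^{p-2}t^2$ for $t\ge 0$. Then for all $t>0$: $\min\{p-1,1\}\le t\varphi_a''(t)/\varphi_a'(t)\le\max\{p-1,1\}$ and $\min\{p,2\}\le t\varphi_a'(t)/\varphi_a(t)\le\max\{p,2\}$. -/
theorem stmt_8 (p s a : ℝ) (hp : 1 < p) (hs : 0 ≤ s) (ha : 0 ≤ a)
    (φ : ℝ → ℝ) (hφ : φ = fun t : ℝ => (a + s + t) ^ (p - 2) * t ^ 2) :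
    (∀ t : ℝ, 0 < t →
        min p 2 ≤ t * deriv φ t / φ t ∧ t * deriv φ t / φ t ≤ max p 2) ∧
      (0 < a + s → ∀ t : ℝ, 0 < t →
        min (p - 1) 1 ≤ t * deriv (deriv φ) t / deriv φ t ∧
          t * deriv (deriv φ) t / deriv φ t ≤ max (p - 1) 1) := by
  subst hφ
  set c := a + s with hc
  have hc0 : 0 ≤ c := by positivity
  have key : ∀ x : ℝ, 0 < c + x →
      HasDerivAt (fun t : ℝ => (c + t) ^ (p - 2) * t ^ 2)
        ((p - 2) * (c + x) ^ (p - 3) * x ^ 2 + (c + x) ^ (p - 2) * (2 * x)) x := by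
    intro x hx
    have h1 : HasDerivAt (fun t : ℝ => c + t) 1 x := (hasDerivAt_id x).const_add c
    have h3 : HasDerivAt (fun t : ℝ => (c + t) ^ (p - 2))
        (1 * (p - 2) * (c + x) ^ (p - 2 - 1)) x := h1.rpow_const (Or.inl hx.ne')
    have h4 : HasDerivAt (fun t : ℝ => t ^ 2) (2 * x) x := by
      simpa using hasDerivAt_pow 2 x
    have h5 := h3.mul h4
    convert h5 using 1
    · rfl
    · rfl
    · rfl
    rw [show p - 2 - 1 = p - 3 by ring]; ring
  have hderiv : ∀ x : ℝ, 0 < c + x →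
      deriv (fun t : ℝ => (c + t) ^ (p - 2) * t ^ 2) x =
        (p - 2) * (c + x) ^ (p - 3) * x ^ 2 + (c + x) ^ (p - 2) * (2 * x) :=
    fun x hx => (key x hx).deriv
  constructor
  · -- first part
    intro t ht
    have hX : 0 < c + t := by linarith
    set X := c + t with hXdef
    have htX : t ≤ X := by rw [hXdef]; linarith
    have hP : (0:ℝ) < X ^ (p - 3) := Real.rpow_pos_of_pos hX _
    have hsplit : X ^ (p - 2) = X ^ (p - 3) * X := by
      rw [show p - 2 = (p - 3) + 1 by ring, Real.rpow_add hX, Real.rpow_one]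
    have hval : t * deriv (fun t : ℝ => (c + t) ^ (p - 2) * t ^ 2) t /
        ((c + t) ^ (p - 2) * t ^ 2) = 2 + (p - 2) * (t / X) := by
      rw [hderiv t hX]
      rw [show c + t = X from rfl, hsplit]
      field_simp
      ring
    rw [hval]
    have hu0 : 0 < t / X := div_pos ht hX
    have hu1 : t / X ≤ 1 := (div_le_one hX).2 htX
    rcases le_total p 2 with h2 | h2
    · rw [min_eq_left h2, max_eq_right h2]
      constructor <;> nlinarith
    · rw [min_eq_right h2, max_eq_left h2]
      constructor <;> nlinarith
  · -- second part
    intro hcpos t ht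
    have hX : 0 < c + t := by linarith
    set X := c + t with hXdef
    have htX : t < X := by rw [hXdef]; linarith
    set g := fun x : ℝ => (p - 2) * (c + x) ^ (p - 3) * x ^ 2 + (c + x) ^ (p - 2) * (2 * x)
      with hg
    have hopen : IsOpen {x : ℝ | 0 < c + x} := by
      have : {x : ℝ | 0 < c + x} = (fun x : ℝ => c + x) ⁻¹' Set.Ioi 0 := rfl
      rw [this]
      exact (continuous_const.add continuous_id).isOpen_preimage _ isOpen_Ioi
    have hEq : deriv (fun t : ℝ => (c + t) ^ (p - 2) * t ^ 2) =ᶠ[nhds t] g := by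
      filter_upwards [hopen.mem_nhds (by simpa using hX)] with x hx
      exact hderiv x hx
    have hg2 : HasDerivAt g
        ((p - 2) * ((p - 3) * X ^ (p - 4) * t ^ 2 + X ^ (p - 3) * (2 * t)) +
          ((p - 2) * X ^ (p - 3) * (2 * t) + X ^ (p - 2) * 2)) t := by
      have h1 : HasDerivAt (fun x : ℝ => c + x) 1 t := (hasDerivAt_id t).const_add c
      have h3 : HasDerivAt (fun x : ℝ => (c + x) ^ (p - 3))
          (1 * (p - 3) * (c + t) ^ (p - 3 - 1)) t := h1.rpow_const (Or.inl hX.ne')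
      have h4 : HasDerivAt (fun x : ℝ => x ^ 2) (2 * t) t := by
        simpa using hasDerivAt_pow 2 t
      have h5 := (h3.mul h4).const_mul (p - 2)
      have h3' : HasDerivAt (fun x : ℝ => (c + x) ^ (p - 2))
          (1 * (p - 2) * (c + t) ^ (p - 2 - 1)) t := h1.rpow_const (Or.inl hX.ne')
      have h6 : HasDerivAt (fun x : ℝ => (2:ℝ) * x) 2 t := by
        simpa using (hasDerivAt_id t).const_mul (2:ℝ)
      have h7 := h3'.mul h6
      have h8 := h5.add h7
      rw [show p - 3 - 1 = p - 4 by ring, show p - 2 - 1 = p - 3 by ring] at h8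
      rw [hg, hXdef]
      convert h8 using 1
      · rfl
      · rfl
      · funext x; simp only [Pi.add_apply, Pi.mul_apply]; ring
      · ring
    have hdd : deriv (deriv (fun t : ℝ => (c + t) ^ (p - 2) * t ^ 2)) t =
        (p - 2) * ((p - 3) * X ^ (p - 4) * t ^ 2 + X ^ (p - 3) * (2 * t)) +
          ((p - 2) * X ^ (p - 3) * (2 * t) + X ^ (p - 2) * 2) := by
      rw [hEq.deriv_eq]
      exact hg2.deriv
    have hP : (0:ℝ) < X ^ (p - 4) := Real.rpow_pos_of_pos hX _
    have hs3 : X ^ (p - 3) = X ^ (p - 4) * X := by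
      rw [show p - 3 = (p - 4) + 1 by ring, Real.rpow_add hX, Real.rpow_one]
    have hs2 : X ^ (p - 2) = X ^ (p - 4) * X * X := by
      rw [show p - 2 = (p - 4) + 1 + 1 by ring, Real.rpow_add hX, Real.rpow_add hX,
        Real.rpow_one]
    have hD : 0 < (p - 2) * t + 2 * X := by nlinarith
    have hval : t * deriv (deriv (fun t : ℝ => (c + t) ^ (p - 2) * t ^ 2)) t /
        deriv (fun t : ℝ => (c + t) ^ (p - 2) * t ^ 2) t =
        ((p - 2) * (p - 3) * t ^ 2 + 4 * (p - 2) * X * t + 2 * X ^ 2) /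
          (X * ((p - 2) * t + 2 * X)) := by
      rw [hdd, hderiv t hX]
      rw [show c + t = X from rfl, hs3, hs2]
      rw [div_eq_div_iff]
      · ring
      · have : (p - 2) * (X ^ (p - 4) * X) * t ^ 2 + X ^ (p - 4) * X * X * (2 * t) =
            X ^ (p - 4) * X * t * ((p - 2) * t + 2 * X) := by ring
        rw [this]
        positivity
      · positivity
    rw [hval]
    clear hval hdd hg2 hEq hopen hderiv key hs2 hs3 hP
    clear_value X g
    clear hg hXdef
    have hDpos : 0 < X * ((p - 2) * t + 2 * X) := by positivity
    rcases le_total p 2 with h2 | h2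
    · rw [min_eq_left (by linarith), max_eq_right (by linarith)]
      constructor
      · rw [le_div_iff₀ hDpos]
        nlinarith [mul_nonneg (mul_nonneg (by linarith : (0:ℝ) ≤ 2 - p)
          (by linarith : (0:ℝ) ≤ X - t)) (by nlinarith : (0:ℝ) ≤ (p - 3) * t + 2 * X)]
      · rw [div_le_iff₀ hDpos]
        nlinarith [mul_nonneg (mul_nonneg (by linarith : (0:ℝ) ≤ 2 - p) ht.le)
          (by nlinarith : (0:ℝ) ≤ (p - 3) * t + 3 * X)]
    · rw [min_eq_right (by linarith), max_eq_left (by linarith)]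
      constructor
      · rw [le_div_iff₀ hDpos]
        nlinarith [mul_nonneg (mul_nonneg (by linarith : (0:ℝ) ≤ p - 2) ht.le)
          (by nlinarith : (0:ℝ) ≤ (p - 3) * t + 3 * X)]
      · rw [div_le_iff₀ hDpos]
        nlinarith [mul_nonneg (mul_nonneg (by linarith : (0:ℝ) ≤ p - 2)
          (by linarith : (0:ℝ) ≤ X - t)) (by nlinarith : (0:ℝ) ≤ (p - 3) * t + 2 * X)]
end

section
/- Let $p>1$, $s\ge 0$, $a\ge 0$, $\varphi_a(t)=(a+s+t)^{p-2}t^2$, and define the complementary function $(\varphi_a)^*(t):=\sup_{\tau\ge 0}(\tau t-\varphi_a(\tau))$. Then there is a constant $c\ge 1$ depending only on $p$ such that for all $t\ge 0$, $c^{-1}((a+s)^{p-1}+t)^{p'-2}t^2 \le (\varphi_a)^*(t) \le c((a+s)^{p-1}+t)^{p'-2}t^2$, where $p'=p/(p-1)$. -/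
open Real

/-- comparison of rpow under two-sided multiplicative bound -/
private lemma pow_comp {A x P : ℝ} (hA : 1 ≤ A) (hP : 0 < P) (hx : 0 < x)
    (h1 : P ≤ A * x) (h2 : x ≤ A * P) (r : ℝ) : x ^ r ≤ A ^ |r| * P ^ r := by
  have hA0 : 0 < A := lt_of_lt_of_le one_pos hA
  rcases le_or_gt 0 r with hr | hr
  · rw [abs_of_nonneg hr]
    calc x ^ r ≤ (A * P) ^ r := Real.rpow_le_rpow hx.le h2 hr
      _ = A ^ r * P ^ r := Real.mul_rpow hA0.le hP.le
  · rw [abs_of_neg hr]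
    have h1' : P / A ≤ x := (div_le_iff₀ hA0).2 (by linarith [h1])
    have hPA : 0 < P / A := div_pos hP hA0
    calc x ^ r ≤ (P / A) ^ r := Real.rpow_le_rpow_of_nonpos hPA h1' hr.le
      _ = P ^ r / A ^ r := Real.div_rpow hP.le hA0.le r
      _ = A ^ (-r) * P ^ r := by
          rw [Real.rpow_neg hA0.le]; ring

/-- monotonicity of τ ↦ (b+τ)^(p-2) * τ -/
private lemma g_mono {p b τ₁ τ₂ : ℝ} (hp : 1 < p) (hb : 0 ≤ b) (h1 : 0 ≤ τ₁)
    (h12 : τ₁ ≤ τ₂) : (b + τ₁) ^ (p - 2) * τ₁ ≤ (b + τ₂) ^ (p - 2) * τ₂ := by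
  rcases eq_or_lt_of_le h1 with h | h1
  · rw [← h]
    have hτ2 : 0 ≤ τ₂ := le_trans h1 h12
    have : 0 ≤ (b + τ₂) ^ (p - 2) * τ₂ :=
      mul_nonneg (Real.rpow_nonneg (by linarith) _) hτ2
    simpa using this
  · have hu : 0 < b + τ₁ := by linarith
    have hv : 0 < b + τ₂ := by linarith
    have hτ2 : 0 < τ₂ := lt_of_lt_of_le h1 h12
    have hratio : (1 : ℝ) ≤ (b + τ₂) / (b + τ₁) := (one_le_div hu).2 (by linarith)
    have hkey : ((b + τ₂) / (b + τ₁)) ^ ((-1 : ℝ)) ≤ ((b + τ₂) / (b + τ₁)) ^ (p - 2) :=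
      Real.rpow_le_rpow_of_exponent_le hratio (by linarith)
    have hinv : ((b + τ₂) / (b + τ₁)) ^ ((-1 : ℝ)) = (b + τ₁) / (b + τ₂) := by
      rw [Real.rpow_neg_one, inv_div]
    have hsplit : (b + τ₂) ^ (p - 2) = (b + τ₁) ^ (p - 2) * ((b + τ₂) / (b + τ₁)) ^ (p - 2) := by
      rw [← Real.mul_rpow hu.le (by positivity)]
      rw [mul_div_cancel₀ _ (ne_of_gt hu)]
    rw [hsplit]
    have h2 : (b + τ₁) / (b + τ₂) ≤ ((b + τ₂) / (b + τ₁)) ^ (p - 2) := hinv ▸ hkey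
    have h3 : τ₁ ≤ (b + τ₁) / (b + τ₂) * τ₂ := by
      rw [div_mul_eq_mul_div, le_div_iff₀ hv]
      nlinarith
    calc (b + τ₁) ^ (p - 2) * τ₁ ≤ (b + τ₁) ^ (p - 2) * ((b + τ₁) / (b + τ₂) * τ₂) := by
          apply mul_le_mul_of_nonneg_left h3 (by positivity)
      _ ≤ (b + τ₁) ^ (p - 2) * (((b + τ₂) / (b + τ₁)) ^ (p - 2) * τ₂) := by
          apply mul_le_mul_of_nonneg_left (mul_le_mul_of_nonneg_right h2 hτ2.le) (by positivity)
      _ = (b + τ₁) ^ (p - 2) * ((b + τ₂) / (b + τ₁)) ^ (p - 2) * τ₂ := by ring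

/-- scaling down: g(θτ) ≤ max(θ, θ^(p-1)) g(τ) for 0 < θ ≤ 1 -/
private lemma scale_down {p b τ θ : ℝ} (hp : 1 < p) (hb : 0 ≤ b) (hτ : 0 ≤ τ)
    (hθ0 : 0 < θ) (hθ1 : θ ≤ 1) :
    (b + θ * τ) ^ (p - 2) * (θ * τ) ≤ max θ (θ ^ (p - 1)) * ((b + τ) ^ (p - 2) * τ) := by
  rcases eq_or_lt_of_le hτ with h | hτ
  · rw [← h]; simp
  rcases le_or_gt 2 p with h2 | h2
  · have hbase : (b + θ * τ) ^ (p - 2) ≤ (b + τ) ^ (p - 2) := by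
      apply Real.rpow_le_rpow (by positivity) (by nlinarith) (by linarith)
    calc (b + θ * τ) ^ (p - 2) * (θ * τ) ≤ (b + τ) ^ (p - 2) * (θ * τ) := by
          apply mul_le_mul_of_nonneg_right hbase (by positivity)
      _ = θ * ((b + τ) ^ (p - 2) * τ) := by ring
      _ ≤ max θ (θ ^ (p - 1)) * ((b + τ) ^ (p - 2) * τ) := by
          apply mul_le_mul_of_nonneg_right (le_max_left _ _) (by positivity)
  · have hbase : (b + θ * τ) ^ (p - 2) ≤ (θ * (b + τ)) ^ (p - 2) := by
      apply Real.rpow_le_rpow_of_nonpos (by positivity) (by nlinarith) (by linarith)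
    have hsplit : (θ * (b + τ)) ^ (p - 2) = θ ^ (p - 2) * (b + τ) ^ (p - 2) :=
      Real.mul_rpow hθ0.le (by positivity)
    have hθp : θ ^ (p - 2) * θ = θ ^ (p - 1) := by
      calc θ ^ (p - 2) * θ = θ ^ (p - 2 + 1) := by rw [Real.rpow_add hθ0, Real.rpow_one]
        _ = θ ^ (p - 1) := by ring_nf
    calc (b + θ * τ) ^ (p - 2) * (θ * τ) ≤ (θ * (b + τ)) ^ (p - 2) * (θ * τ) := by
          apply mul_le_mul_of_nonneg_right hbase (by positivity)
      _ = (θ ^ (p - 2) * θ) * ((b + τ) ^ (p - 2) * τ) := by rw [hsplit]; ring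
      _ = θ ^ (p - 1) * ((b + τ) ^ (p - 2) * τ) := by rw [hθp]
      _ ≤ max θ (θ ^ (p - 1)) * ((b + τ) ^ (p - 2) * τ) := by
          apply mul_le_mul_of_nonneg_right (le_max_right _ _) (by positivity)

/-- scaling up: min(K, K^(p-1)) g(τ) ≤ g(Kτ) for K ≥ 1 -/
private lemma scale_up {p b τ K : ℝ} (hp : 1 < p) (hb : 0 ≤ b) (hτ : 0 ≤ τ)
    (hK : 1 ≤ K) :
    min K (K ^ (p - 1)) * ((b + τ) ^ (p - 2) * τ) ≤ (b + K * τ) ^ (p - 2) * (K * τ) := by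
  have hK0 : 0 < K := lt_of_lt_of_le one_pos hK
  rcases eq_or_lt_of_le hτ with h | hτ
  · rw [← h]; simp
  rcases le_or_gt 2 p with h2 | h2
  · have hbase : (b + τ) ^ (p - 2) ≤ (b + K * τ) ^ (p - 2) := by
      apply Real.rpow_le_rpow (by positivity) (by nlinarith) (by linarith)
    calc min K (K ^ (p - 1)) * ((b + τ) ^ (p - 2) * τ)
        ≤ K * ((b + τ) ^ (p - 2) * τ) := by
          apply mul_le_mul_of_nonneg_right (min_le_left _ _) (by positivity)
      _ ≤ K * ((b + K * τ) ^ (p - 2) * τ) := by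
          apply mul_le_mul_of_nonneg_left (mul_le_mul_of_nonneg_right hbase hτ.le) hK0.le
      _ = (b + K * τ) ^ (p - 2) * (K * τ) := by ring
  · have hbase : (K * (b + τ)) ^ (p - 2) ≤ (b + K * τ) ^ (p - 2) := by
      apply Real.rpow_le_rpow_of_nonpos (by positivity) (by nlinarith) (by linarith)
    have hsplit : (K * (b + τ)) ^ (p - 2) = K ^ (p - 2) * (b + τ) ^ (p - 2) :=
      Real.mul_rpow hK0.le (by positivity)
    have hKp : K ^ (p - 2) * K = K ^ (p - 1) := by
      calc K ^ (p - 2) * K = K ^ (p - 2 + 1) := by rw [Real.rpow_add hK0, Real.rpow_one]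
        _ = K ^ (p - 1) := by ring_nf
    calc min K (K ^ (p - 1)) * ((b + τ) ^ (p - 2) * τ)
        ≤ K ^ (p - 1) * ((b + τ) ^ (p - 2) * τ) := by
          apply mul_le_mul_of_nonneg_right (min_le_right _ _) (by positivity)
      _ = (K ^ (p - 2) * K) * ((b + τ) ^ (p - 2) * τ) := by rw [hKp]
      _ = (K * (b + τ)) ^ (p - 2) * (K * τ) := by rw [hsplit]; ring
      _ ≤ (b + K * τ) ^ (p - 2) * (K * τ) := by
          apply mul_le_mul_of_nonneg_right hbase (by positivity)

set_option maxHeartbeats 2000000 in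
theorem stmt_10 (p : ℝ) (hp : 1 < p) :
    ∃ c : ℝ, 1 ≤ c ∧ ∀ s a : ℝ, 0 ≤ s → 0 ≤ a → ∀ t : ℝ, 0 ≤ t →
      c⁻¹ * ((a + s) ^ (p - 1) + t) ^ (p / (p - 1) - 2) * t ^ 2 ≤
          sSup {x : ℝ | ∃ τ : ℝ, 0 ≤ τ ∧ x = τ * t - (a + s + τ) ^ (p - 2) * τ ^ 2} ∧
        sSup {x : ℝ | ∃ τ : ℝ, 0 ≤ τ ∧ x = τ * t - (a + s + τ) ^ (p - 2) * τ ^ 2} ≤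
          c * ((a + s) ^ (p - 1) + t) ^ (p / (p - 1) - 2) * t ^ 2 := by
  have hq : 0 < p - 1 := by linarith
  set e : ℝ := p / (p - 1) - 2 with he
  have he1 : e + 1 = 1 / (p - 1) := by
    rw [he]; field_simp; ring
  -- constants depending only on p
  set m' : ℝ := 2 ^ ((1:ℝ) / (p - 1)) * max 1 (2 ^ (-e)) with hm'def
  have h2q1 : (1:ℝ) ≤ 2 ^ ((1:ℝ) / (p - 1)) := Real.one_le_rpow one_le_two (by positivity)
  have hmax1 : (1:ℝ) ≤ max 1 ((2:ℝ) ^ (-e)) := le_max_left _ _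
  have hm'1 : 1 ≤ m' := by
    have := mul_le_mul h2q1 hmax1 zero_le_one (by positivity)
    simpa [hm'def] using this
  set A : ℝ := max m' 2 with hAdef
  have hA1 : (1:ℝ) ≤ A := le_trans one_le_two (le_max_right _ _)
  have hA0 : (0:ℝ) < A := lt_of_lt_of_le one_pos hA1
  set D : ℝ := A ^ |p - 2| with hDdef
  have hD1 : (1:ℝ) ≤ D := Real.one_le_rpow hA1 (abs_nonneg _)
  have hD0 : (0:ℝ) < D := lt_of_lt_of_le one_pos hD1
  set r : ℝ := max 1 (1 / (p - 1)) with hrdef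
  have hr1 : (1:ℝ) ≤ r := le_max_left _ _
  have hrq : (1:ℝ) ≤ r * (p - 1) := by
    have h1 : 1 / (p - 1) ≤ r := le_max_right _ _
    calc (1:ℝ) = 1 / (p - 1) * (p - 1) := by field_simp
      _ ≤ r * (p - 1) := mul_le_mul_of_nonneg_right h1 hq.le
  have h2D : (1:ℝ) ≤ 2 * D := by linarith
  have h2D0 : (0:ℝ) < 2 * D := by linarith
  set θ : ℝ := (2 * D) ^ (-r) with hθdef
  have hθ0 : 0 < θ := Real.rpow_pos_of_pos h2D0 _
  have hθ1 : θ ≤ 1 := Real.rpow_le_one_of_one_le_of_nonpos h2D (by linarith)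
  have hθa : θ ≤ (2 * D)⁻¹ := by
    calc θ ≤ (2 * D) ^ (-1 : ℝ) := Real.rpow_le_rpow_of_exponent_le h2D (by linarith)
      _ = (2 * D)⁻¹ := Real.rpow_neg_one _
  have hθb : θ ^ (p - 1) ≤ (2 * D)⁻¹ := by
    have h1 : θ ^ (p - 1) = (2 * D) ^ (-r * (p - 1)) := by
      rw [hθdef, ← Real.rpow_mul h2D0.le]
    calc θ ^ (p - 1) = (2 * D) ^ (-r * (p - 1)) := h1
      _ ≤ (2 * D) ^ (-1 : ℝ) := Real.rpow_le_rpow_of_exponent_le h2D (by linarith [hrq])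
      _ = (2 * D)⁻¹ := Real.rpow_neg_one _
  have hθmax : max θ (θ ^ (p - 1)) ≤ (2 * D)⁻¹ := max_le hθa hθb
  set K : ℝ := D ^ r with hKdef
  have hK1 : (1:ℝ) ≤ K := Real.one_le_rpow hD1 (by linarith)
  have hKa : D ≤ K := by
    calc D = D ^ (1:ℝ) := (Real.rpow_one D).symm
      _ ≤ D ^ r := Real.rpow_le_rpow_of_exponent_le hD1 hr1
  have hKb : D ≤ K ^ (p - 1) := by
    have h1 : K ^ (p - 1) = D ^ (r * (p - 1)) := by
      rw [hKdef, ← Real.rpow_mul hD0.le]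
    calc D = D ^ (1:ℝ) := (Real.rpow_one D).symm
      _ ≤ D ^ (r * (p - 1)) := Real.rpow_le_rpow_of_exponent_le hD1 hrq
      _ = K ^ (p - 1) := h1.symm
  have hKmin : D ≤ min K (K ^ (p - 1)) := le_min hKa hKb
  refine ⟨max (max K (2 / θ)) 1, le_max_right _ _, ?_⟩
  set c : ℝ := max (max K (2 / θ)) 1 with hcdef
  have hc1 : (1:ℝ) ≤ c := le_max_right _ _
  have hc0 : (0:ℝ) < c := lt_of_lt_of_le one_pos hc1
  have hcK : K ≤ c := le_trans (le_max_left _ _) (le_max_left _ _)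
  have hcθ : 2 / θ ≤ c := le_trans (le_max_right K _) (le_max_left _ _)
  have hcinv : c⁻¹ ≤ θ / 2 := by
    rw [inv_eq_one_div, div_le_div_iff₀ hc0 (by norm_num : (0:ℝ) < 2)]
    have h2 : 2 ≤ c * θ := (div_le_iff₀ hθ0).1 hcθ
    linarith [h2]
  intro s a hs ha t ht
  set b : ℝ := a + s with hbdef
  have hb : 0 ≤ b := by rw [hbdef]; linarith
  set B : ℝ := b ^ (p - 1) with hBdef
  have hB : 0 ≤ B := Real.rpow_nonneg hb _
  set S : Set ℝ := {x : ℝ | ∃ τ : ℝ, 0 ≤ τ ∧ x = τ * t - (b + τ) ^ (p - 2) * τ ^ 2} with hSdef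
  have h0S : (0:ℝ) ∈ S := ⟨0, le_refl 0, by norm_num⟩
  rcases eq_or_lt_of_le ht with ht0 | ht0
  · -- case t = 0
    have hub : ∀ x ∈ S, x ≤ 0 := by
      rintro x ⟨τ, hτ, rfl⟩
      have h1 : 0 ≤ (b + τ) ^ (p - 2) * τ ^ 2 :=
        mul_nonneg (Real.rpow_nonneg (by linarith) _) (by positivity)
      rw [← ht0]
      have h2 : τ * 0 - (b + τ) ^ (p - 2) * τ ^ 2 = -((b + τ) ^ (p - 2) * τ ^ 2) := by ring
      rw [h2]
      linarith
    have hbdd : BddAbove S := ⟨0, fun x hx => hub x hx⟩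
    have h1 : sSup S ≤ 0 := Real.sSup_le hub le_rfl
    have h2 : 0 ≤ sSup S := le_csSup hbdd h0S
    rw [← ht0]
    norm_num
    constructor <;> linarith
  · -- case 0 < t
    set τ₀ : ℝ := (B + t) ^ e * t with hτ₀def
    set P : ℝ := (B + t) ^ ((1:ℝ) / (p - 1)) with hPdef
    have hBt : 0 < B + t := by linarith
    have hP : 0 < P := Real.rpow_pos_of_pos hBt _
    have hτ₀ : 0 < τ₀ := mul_pos (Real.rpow_pos_of_pos hBt _) ht0
    have hτ₀P : τ₀ ≤ P := by
      calc τ₀ = (B + t) ^ e * t := hτ₀def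
        _ ≤ (B + t) ^ e * (B + t) :=
            mul_le_mul_of_nonneg_left (by linarith) (Real.rpow_nonneg hBt.le _)
        _ = (B + t) ^ (e + 1) := (Real.rpow_add_one hBt.ne' e).symm
        _ = P := by rw [he1, hPdef]
    have hbid : (b ^ (p - 1)) ^ ((1:ℝ) / (p - 1)) = b := by
      rw [← Real.rpow_mul hb, mul_one_div, div_self hq.ne', Real.rpow_one]
    have hbP : b ≤ P := by
      calc b = (b ^ (p - 1)) ^ ((1:ℝ) / (p - 1)) := hbid.symm
        _ ≤ (B + t) ^ ((1:ℝ) / (p - 1)) :=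
            Real.rpow_le_rpow hB (by rw [hBdef]; linarith) (by positivity)
        _ = P := by rw [hPdef]
    have hbτ₀ : 0 < b + τ₀ := by linarith
    have hup : b + τ₀ ≤ 2 * P := by linarith
    have hlow : P ≤ m' * (b + τ₀) := by
      rcases le_total t B with htB | htB
      · have h1 : P ≤ (2 * B) ^ ((1:ℝ) / (p - 1)) :=
          Real.rpow_le_rpow hBt.le (by linarith) (by positivity)
        have h2 : ((2:ℝ) * B) ^ ((1:ℝ) / (p - 1)) = 2 ^ ((1:ℝ) / (p - 1)) * b := by
          rw [Real.mul_rpow (by norm_num) hB, hBdef, hbid]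
        have h3 : 2 ^ ((1:ℝ) / (p - 1)) ≤ m' := by
          rw [hm'def]
          exact le_mul_of_one_le_right (by positivity) hmax1
        calc P ≤ 2 ^ ((1:ℝ) / (p - 1)) * b := by rw [← h2]; exact h1
          _ ≤ 2 ^ ((1:ℝ) / (p - 1)) * (b + τ₀) :=
              mul_le_mul_of_nonneg_left (by linarith) (by positivity)
          _ ≤ m' * (b + τ₀) := mul_le_mul_of_nonneg_right h3 (by linarith)
      · have h1 : P ≤ (2 * t) ^ ((1:ℝ) / (p - 1)) :=
          Real.rpow_le_rpow hBt.le (by linarith) (by positivity)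
        have h2 : ((2:ℝ) * t) ^ ((1:ℝ) / (p - 1)) =
            2 ^ ((1:ℝ) / (p - 1)) * t ^ ((1:ℝ) / (p - 1)) :=
          Real.mul_rpow (by norm_num) ht0.le
        have hte : t ^ e ≤ max 1 ((2:ℝ) ^ (-e)) * (B + t) ^ e := by
          rcases le_or_gt 0 e with he0 | he0
          · calc t ^ e ≤ (B + t) ^ e := Real.rpow_le_rpow ht0.le (by linarith) he0
              _ ≤ max 1 ((2:ℝ) ^ (-e)) * (B + t) ^ e :=
                  le_mul_of_one_le_left (Real.rpow_nonneg hBt.le _) (le_max_left _ _)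
          · have h4 : ((2:ℝ) * t) ^ e ≤ (B + t) ^ e :=
              Real.rpow_le_rpow_of_nonpos hBt (by linarith) he0.le
            have h5 : ((2:ℝ) * t) ^ e = 2 ^ e * t ^ e := Real.mul_rpow (by norm_num) ht0.le
            have h6 : (2:ℝ) ^ (-e) * 2 ^ e = 1 := by
              rw [← Real.rpow_add (by norm_num : (0:ℝ) < 2)]
              norm_num
            calc t ^ e = (2:ℝ) ^ (-e) * (2 ^ e * t ^ e) := by
                  rw [← mul_assoc, h6, one_mul]
              _ = (2:ℝ) ^ (-e) * (2 * t) ^ e := by rw [h5]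
              _ ≤ (2:ℝ) ^ (-e) * (B + t) ^ e :=
                  mul_le_mul_of_nonneg_left h4 (Real.rpow_nonneg (by norm_num) _)
              _ ≤ max 1 ((2:ℝ) ^ (-e)) * (B + t) ^ e :=
                  mul_le_mul_of_nonneg_right (le_max_right _ _) (Real.rpow_nonneg hBt.le _)
        have h7 : t ^ ((1:ℝ) / (p - 1)) ≤ max 1 ((2:ℝ) ^ (-e)) * τ₀ := by
          calc t ^ ((1:ℝ) / (p - 1)) = t ^ (e + 1) := by rw [he1]
            _ = t ^ e * t := Real.rpow_add_one ht0.ne' e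
            _ ≤ (max 1 ((2:ℝ) ^ (-e)) * (B + t) ^ e) * t :=
                mul_le_mul_of_nonneg_right hte ht0.le
            _ = max 1 ((2:ℝ) ^ (-e)) * τ₀ := by rw [hτ₀def]; ring
        calc P ≤ 2 ^ ((1:ℝ) / (p - 1)) * t ^ ((1:ℝ) / (p - 1)) := by rw [← h2]; exact h1
          _ ≤ 2 ^ ((1:ℝ) / (p - 1)) * (max 1 ((2:ℝ) ^ (-e)) * τ₀) :=
              mul_le_mul_of_nonneg_left h7 (by positivity)
          _ = m' * τ₀ := by rw [hm'def]; ring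
          _ ≤ m' * (b + τ₀) := mul_le_mul_of_nonneg_left (by linarith) (by linarith)
    have hx1 : P ≤ A * (b + τ₀) :=
      hlow.trans (mul_le_mul_of_nonneg_right (le_max_left _ _) hbτ₀.le)
    have hx2 : b + τ₀ ≤ A * P :=
      hup.trans (mul_le_mul_of_nonneg_right (le_max_right _ _) hP.le)
    have hcomp1 : (b + τ₀) ^ (p - 2) ≤ D * P ^ (p - 2) :=
      pow_comp hA1 hP hbτ₀ hx1 hx2 (p - 2)
    have hcomp2 : P ^ (p - 2) ≤ D * (b + τ₀) ^ (p - 2) :=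
      pow_comp hA1 hbτ₀ hP hx2 hx1 (p - 2)
    have hexp : (1 / (p - 1)) * (p - 2) + e = 0 := by
      rw [he]; field_simp; ring
    have hPid : P ^ (p - 2) * τ₀ = t := by
      calc P ^ (p - 2) * τ₀
          = (B + t) ^ ((1 / (p - 1)) * (p - 2)) * ((B + t) ^ e * t) := by
            rw [hPdef, hτ₀def, ← Real.rpow_mul hBt.le]
        _ = ((B + t) ^ ((1 / (p - 1)) * (p - 2)) * (B + t) ^ e) * t := by ring
        _ = (B + t) ^ ((1 / (p - 1)) * (p - 2) + e) * t := by rw [Real.rpow_add hBt]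
        _ = t := by rw [hexp, Real.rpow_zero, one_mul]
    have hg_up : (b + τ₀) ^ (p - 2) * τ₀ ≤ D * t := by
      calc (b + τ₀) ^ (p - 2) * τ₀ ≤ (D * P ^ (p - 2)) * τ₀ :=
            mul_le_mul_of_nonneg_right hcomp1 hτ₀.le
        _ = D * (P ^ (p - 2) * τ₀) := by ring
        _ = D * t := by rw [hPid]
    have hg_low : t ≤ D * ((b + τ₀) ^ (p - 2) * τ₀) := by
      calc t = P ^ (p - 2) * τ₀ := hPid.symm
        _ ≤ (D * (b + τ₀) ^ (p - 2)) * τ₀ := mul_le_mul_of_nonneg_right hcomp2 hτ₀.le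
        _ = D * ((b + τ₀) ^ (p - 2) * τ₀) := by ring
    have hgnn : 0 ≤ (b + τ₀) ^ (p - 2) * τ₀ :=
      mul_nonneg (Real.rpow_nonneg hbτ₀.le _) hτ₀.le
    -- upper bound for all elements of S
    have hub : ∀ x ∈ S, x ≤ K * (τ₀ * t) := by
      rintro x ⟨τ, hτ, rfl⟩
      have hKt0 : 0 ≤ K * τ₀ := mul_nonneg (by linarith) hτ₀.le
      rcases le_or_gt τ (K * τ₀) with hcase | hcase
      · have hH0 : 0 ≤ (b + τ) ^ (p - 2) * τ ^ 2 :=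
          mul_nonneg (Real.rpow_nonneg (by linarith) _) (by positivity)
        have h1 : τ * t ≤ K * τ₀ * t := mul_le_mul_of_nonneg_right hcase ht0.le
        calc τ * t - (b + τ) ^ (p - 2) * τ ^ 2 ≤ τ * t := by linarith
          _ ≤ K * (τ₀ * t) := by rw [← mul_assoc]; exact h1
      · have h1 : (b + K * τ₀) ^ (p - 2) * (K * τ₀) ≤ (b + τ) ^ (p - 2) * τ :=
          g_mono hp hb hKt0 hcase.le
        have h2 := scale_up (b := b) (τ := τ₀) hp hb hτ₀.le hK1
        have h3 : t ≤ (b + τ) ^ (p - 2) * τ := by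
          have h4 : D * ((b + τ₀) ^ (p - 2) * τ₀) ≤
              min K (K ^ (p - 1)) * ((b + τ₀) ^ (p - 2) * τ₀) :=
            mul_le_mul_of_nonneg_right hKmin hgnn
          linarith
        have hτ0 : 0 ≤ τ := hτ
        have h5 : t * τ ≤ ((b + τ) ^ (p - 2) * τ) * τ := mul_le_mul_of_nonneg_right h3 hτ0
        have hsq : (b + τ) ^ (p - 2) * τ ^ 2 = ((b + τ) ^ (p - 2) * τ) * τ := by ring
        have h6 : 0 ≤ K * (τ₀ * t) := mul_nonneg (by linarith) (mul_nonneg hτ₀.le ht0.le)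
        calc τ * t - (b + τ) ^ (p - 2) * τ ^ 2 ≤ 0 := by rw [hsq]; linarith
          _ ≤ K * (τ₀ * t) := h6
    have hbdd : BddAbove S := ⟨K * (τ₀ * t), fun x hx => hub x hx⟩
    have hGeq : (B + t) ^ e * t ^ 2 = τ₀ * t := by rw [hτ₀def]; ring
    constructor
    · -- lower bound
      have hH : (b + θ * τ₀) ^ (p - 2) * (θ * τ₀) ≤ t / 2 := by
        have h1 := scale_down (b := b) (τ := τ₀) hp hb hτ₀.le hθ0 hθ1
        have h2 : max θ (θ ^ (p - 1)) * ((b + τ₀) ^ (p - 2) * τ₀) ≤ (2 * D)⁻¹ * (D * t) := by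
          apply mul_le_mul hθmax hg_up hgnn (by positivity)
        have h3 : (2 * D)⁻¹ * (D * t) = t / 2 := by
          field_simp
        linarith
      have hmem : θ * τ₀ * t - (b + θ * τ₀) ^ (p - 2) * (θ * τ₀) ^ 2 ∈ S :=
        ⟨θ * τ₀, (mul_pos hθ0 hτ₀).le, rfl⟩
      have hHsq : (b + θ * τ₀) ^ (p - 2) * (θ * τ₀) ^ 2 ≤ (t / 2) * (θ * τ₀) := by
        have := mul_le_mul_of_nonneg_right hH (mul_pos hθ0 hτ₀).le
        calc (b + θ * τ₀) ^ (p - 2) * (θ * τ₀) ^ 2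
            = ((b + θ * τ₀) ^ (p - 2) * (θ * τ₀)) * (θ * τ₀) := by ring
          _ ≤ (t / 2) * (θ * τ₀) := this
      have hx₁ : θ / 2 * (τ₀ * t) ≤ θ * τ₀ * t - (b + θ * τ₀) ^ (p - 2) * (θ * τ₀) ^ 2 := by
        have heq : θ * τ₀ * t - t / 2 * (θ * τ₀) = θ / 2 * (τ₀ * t) := by ring
        linarith [hHsq]
      have hle : c⁻¹ * (τ₀ * t) ≤ θ / 2 * (τ₀ * t) :=
        mul_le_mul_of_nonneg_right hcinv (mul_nonneg hτ₀.le ht0.le)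
      calc c⁻¹ * (B + t) ^ e * t ^ 2 = c⁻¹ * (τ₀ * t) := by rw [mul_assoc, hGeq]
        _ ≤ θ / 2 * (τ₀ * t) := hle
        _ ≤ θ * τ₀ * t - (b + θ * τ₀) ^ (p - 2) * (θ * τ₀) ^ 2 := hx₁
        _ ≤ sSup S := le_csSup hbdd hmem
    · -- upper bound
      have h1 : sSup S ≤ K * (τ₀ * t) :=
        Real.sSup_le hub (mul_nonneg (by linarith) (mul_nonneg hτ₀.le ht0.le))
      calc sSup S ≤ K * (τ₀ * t) := h1
        _ ≤ c * (τ₀ * t) :=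
            mul_le_mul_of_nonneg_right hcK (mul_nonneg hτ₀.le ht0.le)
        _ = c * (B + t) ^ e * t ^ 2 := by rw [← hGeq]; ring
end
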